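/- arXiv:1304.0403 — 2 statements merged into one kernel-verified Lean document; each statement's English description precedes it below -/
import Mathlib

section
/- Suppose the global symmetric positive semidefinite matrix A is assembled from local symmetric positive semidefinite matrices: A = sum_{E} R_E^T A_E R_E, each carrying a 2x2 block structure compatible with the global partitioning, and suppose each local matrix A_E satisfies the strengthened CBS inequality with local constant gamma_E < 1. Then the global CBS constant gamma satisfies gamma <= max_E gamma_E < 1. -/
/-!
Evaluating the assembled matrix on block vectors `(v₁, 0)` and `(0, v₂)` splits each of the three
global forms `v₁ᵀ A₁₁ v₁`, `v₁ᵀ A₁₂ v₂`, `v₂ᵀ A₂₂ v₂` into the sum of the corresponding local forms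
of the restricted vectors `R₁ v₁`, `R₂ v₂`. Bounding each local cross term by the local CBS
inequality with the common constant `max γ_E`, the Cauchy–Schwarz inequality
`∑ √aₑ √bₑ ≤ √(∑ aₑ) √(∑ bₑ)` for the nonnegative local forms gives the global inequality.
-/

namespace Matrix

variable {ι α : Type*} {l m n o : Type*}

theorem sumElim_dotProduct_fromBlocks_mulVec_sumElim [Fintype l] [Fintype m] [Fintype n]
    [Fintype o] [NonUnitalNonAssocSemiring α] (A : Matrix n l α) (B : Matrix n m α)
    (C : Matrix o l α) (D : Matrix o m α) (x₁ : n → α) (x₂ : o → α) (y₁ : l → α) (y₂ : m → α) :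
    Sum.elim x₁ x₂ ⬝ᵥ fromBlocks A B C D *ᵥ Sum.elim y₁ y₂ =
      x₁ ⬝ᵥ A *ᵥ y₁ + x₁ ⬝ᵥ B *ᵥ y₂ + (x₂ ⬝ᵥ C *ᵥ y₁ + x₂ ⬝ᵥ D *ᵥ y₂) := by
  simp only [fromBlocks_mulVec, Sum.elim_comp_inl, Sum.elim_comp_inr,
    sumElim_dotProduct_sumElim, dotProduct_add]

theorem fromBlocks_zero_zero_mulVec_sumElim [Fintype l] [Fintype m]
    [NonUnitalNonAssocSemiring α] (R₁ : Matrix n l α) (R₂ : Matrix o m α) (x : l → α)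
    (y : m → α) :
    fromBlocks R₁ 0 0 R₂ *ᵥ Sum.elim x y = Sum.elim (R₁ *ᵥ x) (R₂ *ᵥ y) := by
  simp [fromBlocks_mulVec]

theorem dotProduct_transpose_mul_mul_mulVec [Fintype m] [Fintype n] [CommSemiring α]
    (P : Matrix m n α) (M : Matrix m m α) (u w : n → α) :
    u ⬝ᵥ (Pᵀ * M * P) *ᵥ w = (P *ᵥ u) ⬝ᵥ M *ᵥ (P *ᵥ w) := by
  rw [← mulVec_mulVec, ← mulVec_mulVec, dotProduct_mulVec, vecMul_transpose]

theorem dotProduct_sum_transpose_mul_mul_mulVec {κ : ι → Type*} [∀ i, Fintype (κ i)]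
    [Fintype n] [CommSemiring α] (s : Finset ι) (P : ∀ i, Matrix (κ i) n α)
    (M : ∀ i, Matrix (κ i) (κ i) α) (u w : n → α) :
    u ⬝ᵥ (∑ i ∈ s, (P i)ᵀ * M i * P i) *ᵥ w = ∑ i ∈ s, (P i *ᵥ u) ⬝ᵥ M i *ᵥ (P i *ᵥ w) := by
  simp only [sum_mulVec, dotProduct_sum, dotProduct_transpose_mul_mul_mulVec]

theorem dotProduct_blocks_mulVec_eq_sum_of_fromBlocks_eq_sum {κ₁ κ₂ : ι → Type*} [∀ i, Fintype (κ₁ i)]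
    [∀ i, Fintype (κ₂ i)] [Fintype m] [Fintype n] [CommSemiring α] {s : Finset ι}
    {A₁₁ : Matrix m m α} {A₁₂ : Matrix m n α} {A₂₁ : Matrix n m α} {A₂₂ : Matrix n n α}
    {M : ∀ i, Matrix (κ₁ i ⊕ κ₂ i) (κ₁ i ⊕ κ₂ i) α} {R₁ : ∀ i, Matrix (κ₁ i) m α}
    {R₂ : ∀ i, Matrix (κ₂ i) n α}
    (h : fromBlocks A₁₁ A₁₂ A₂₁ A₂₂ =
      ∑ i ∈ s, (fromBlocks (R₁ i) 0 0 (R₂ i))ᵀ * M i * fromBlocks (R₁ i) 0 0 (R₂ i))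
    (x₁ y₁ : m → α) (x₂ y₂ : n → α) :
    x₁ ⬝ᵥ A₁₁ *ᵥ y₁ + x₁ ⬝ᵥ A₁₂ *ᵥ y₂ + (x₂ ⬝ᵥ A₂₁ *ᵥ y₁ + x₂ ⬝ᵥ A₂₂ *ᵥ y₂) =
      ∑ i ∈ s, (R₁ i *ᵥ x₁ ⬝ᵥ (M i).toBlocks₁₁ *ᵥ (R₁ i *ᵥ y₁) +
        R₁ i *ᵥ x₁ ⬝ᵥ (M i).toBlocks₁₂ *ᵥ (R₂ i *ᵥ y₂) +
        (R₂ i *ᵥ x₂ ⬝ᵥ (M i).toBlocks₂₁ *ᵥ (R₁ i *ᵥ y₁) +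
          R₂ i *ᵥ x₂ ⬝ᵥ (M i).toBlocks₂₂ *ᵥ (R₂ i *ᵥ y₂))) := by
  rw [← sumElim_dotProduct_fromBlocks_mulVec_sumElim, h, dotProduct_sum_transpose_mul_mul_mulVec]
  refine Finset.sum_congr rfl fun i _ => ?_
  rw [fromBlocks_zero_zero_mulVec_sumElim, fromBlocks_zero_zero_mulVec_sumElim,
    ← sumElim_dotProduct_fromBlocks_mulVec_sumElim, fromBlocks_toBlocks]

end Matrix

theorem Real.abs_sum_le_mul_sqrt_sum_mul_sqrt_sum {ι : Type*} {s : Finset ι} {x a b : ι → ℝ}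
    {γ : ℝ} (hγ : 0 ≤ γ) (ha : ∀ i, 0 ≤ a i) (hb : ∀ i, 0 ≤ b i)
    (hx : ∀ i ∈ s, |x i| ≤ γ * √(a i) * √(b i)) :
    |∑ i ∈ s, x i| ≤ γ * √(∑ i ∈ s, a i) * √(∑ i ∈ s, b i) :=
  calc |∑ i ∈ s, x i| ≤ ∑ i ∈ s, |x i| := Finset.abs_sum_le_sum_abs _ _
    _ ≤ ∑ i ∈ s, γ * (√(a i) * √(b i)) := Finset.sum_le_sum fun i hi => by
        simpa only [mul_assoc] using hx i hi
    _ = γ * ∑ i ∈ s, √(a i) * √(b i) := by rw [Finset.mul_sum]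
    _ ≤ γ * √(∑ i ∈ s, a i) * √(∑ i ∈ s, b i) := by
        rw [mul_assoc]
        exact mul_le_mul_of_nonneg_left (sum_sqrt_mul_sqrt_le s ha hb) hγ

open Matrix Real in
theorem global_cbs_le_max_local_cbs_general
    {ι : Type*} [Fintype ι] [Nonempty ι] {n1 n2 : ℕ} {m1 m2 : ι → ℕ}
    (A11 : Matrix (Fin n1) (Fin n1) ℝ) (A12 : Matrix (Fin n1) (Fin n2) ℝ)
    (A21 : Matrix (Fin n2) (Fin n1) ℝ) (A22 : Matrix (Fin n2) (Fin n2) ℝ)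
    (AE : ∀ E : ι, Matrix (Fin (m1 E) ⊕ Fin (m2 E)) (Fin (m1 E) ⊕ Fin (m2 E)) ℝ)
    (R1 : ∀ E : ι, Matrix (Fin (m1 E)) (Fin n1) ℝ)
    (R2 : ∀ E : ι, Matrix (Fin (m2 E)) (Fin n2) ℝ)
    (hassemble : Matrix.fromBlocks A11 A12 A21 A22 =
      ∑ E : ι, (Matrix.fromBlocks (R1 E) 0 0 (R2 E))ᵀ * AE E *
        Matrix.fromBlocks (R1 E) 0 0 (R2 E))
    (hAEpsd : ∀ E, (AE E).PosSemidef)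
    (γE : ι → ℝ) (hγE0 : ∀ E, 0 ≤ γE E) (hγE1 : ∀ E, γE E < 1)
    (hlocalCBS : ∀ E (v1 : Fin (m1 E) → ℝ) (v2 : Fin (m2 E) → ℝ),
      |v1 ⬝ᵥ (AE E).toBlocks₁₂ *ᵥ v2| ≤
        γE E * sqrt (v1 ⬝ᵥ (AE E).toBlocks₁₁ *ᵥ v1) * sqrt (v2 ⬝ᵥ (AE E).toBlocks₂₂ *ᵥ v2)) :
    (∀ (v1 : Fin n1 → ℝ) (v2 : Fin n2 → ℝ),
      |v1 ⬝ᵥ A12 *ᵥ v2| ≤ (Finset.univ.sup' Finset.univ_nonempty γE) *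
        sqrt (v1 ⬝ᵥ A11 *ᵥ v1) * sqrt (v2 ⬝ᵥ A22 *ᵥ v2)) ∧
    Finset.univ.sup' Finset.univ_nonempty γE < 1 := by
  set γ := Finset.univ.sup' Finset.univ_nonempty γE
  have hγE : ∀ E, γE E ≤ γ := fun E => Finset.le_sup' γE (Finset.mem_univ E)
  refine ⟨fun v1 v2 => ?_, (Finset.sup'_lt_iff _).2 fun E _ => hγE1 E⟩
  have h11 := dotProduct_blocks_mulVec_eq_sum_of_fromBlocks_eq_sum hassemble v1 v1 0 0
  have h12 := dotProduct_blocks_mulVec_eq_sum_of_fromBlocks_eq_sum hassemble v1 0 0 v2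
  have h22 := dotProduct_blocks_mulVec_eq_sum_of_fromBlocks_eq_sum hassemble 0 0 v2 v2
  simp only [mulVec_zero, dotProduct_zero, zero_dotProduct, add_zero, zero_add] at h11 h12 h22
  rw [h11, h12, h22]
  obtain ⟨E₀⟩ := ‹Nonempty ι›
  refine abs_sum_le_mul_sqrt_sum_mul_sqrt_sum ((hγE0 E₀).trans (hγE E₀)) ?_ ?_ fun E _ => ?_
  -- `toBlocks₁₁ = submatrix Sum.inl Sum.inl` by definition, and `star` is trivial on `ℝ`.
  · exact fun E => ((hAEpsd E).submatrix Sum.inl).dotProduct_mulVec_nonneg _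
  · exact fun E => ((hAEpsd E).submatrix Sum.inr).dotProduct_mulVec_nonneg _
  · exact (hlocalCBS E _ _).trans (by gcongr; exact hγE E)

open Matrix Real in
/-- The global CBS constant is bounded by the maximum of the local CBS constants:
if the global SPSD matrix is assembled from local SPSD matrices via block-compatible
restriction matrices, and each local matrix satisfies the strengthened CBS inequality
with constant `γE E < 1`, then the global matrix satisfies the CBS inequality with
constant `max_E γE E < 1`. -/
theorem global_cbs_le_max_local_cbs
    {ι : Type*} [Fintype ι] [Nonempty ι] {n1 n2 : ℕ} {m1 m2 : ι → ℕ}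
    (A11 : Matrix (Fin n1) (Fin n1) ℝ) (A12 : Matrix (Fin n1) (Fin n2) ℝ)
    (A21 : Matrix (Fin n2) (Fin n1) ℝ) (A22 : Matrix (Fin n2) (Fin n2) ℝ)
    (AE : ∀ E : ι, Matrix (Fin (m1 E) ⊕ Fin (m2 E)) (Fin (m1 E) ⊕ Fin (m2 E)) ℝ)
    (R1 : ∀ E : ι, Matrix (Fin (m1 E)) (Fin n1) ℝ)
    (R2 : ∀ E : ι, Matrix (Fin (m2 E)) (Fin n2) ℝ)
    (hassemble : Matrix.fromBlocks A11 A12 A21 A22 =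
      ∑ E : ι, (Matrix.fromBlocks (R1 E) 0 0 (R2 E))ᵀ * AE E *
        Matrix.fromBlocks (R1 E) 0 0 (R2 E))
    (hApsd : (Matrix.fromBlocks A11 A12 A21 A22).PosSemidef)
    (hAEpsd : ∀ E, (AE E).PosSemidef)
    (γE : ι → ℝ) (hγE0 : ∀ E, 0 ≤ γE E) (hγE1 : ∀ E, γE E < 1)
    (hlocalCBS : ∀ E (v1 : Fin (m1 E) → ℝ) (v2 : Fin (m2 E) → ℝ),
      |v1 ⬝ᵥ (AE E).toBlocks₁₂ *ᵥ v2| ≤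
        γE E * sqrt (v1 ⬝ᵥ (AE E).toBlocks₁₁ *ᵥ v1) * sqrt (v2 ⬝ᵥ (AE E).toBlocks₂₂ *ᵥ v2)) :
    (∀ (v1 : Fin n1 → ℝ) (v2 : Fin n2 → ℝ),
      |v1 ⬝ᵥ A12 *ᵥ v2| ≤ (Finset.univ.sup' Finset.univ_nonempty γE) *
        sqrt (v1 ⬝ᵥ A11 *ᵥ v1) * sqrt (v2 ⬝ᵥ A22 *ᵥ v2)) ∧
    Finset.univ.sup' Finset.univ_nonempty γE < 1 :=
  global_cbs_le_max_local_cbs_general A11 A12 A21 A22 AE R1 R2 hassemble hAEpsd γE hγE0 hγE1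
    hlocalCBS
end

section
/- For a 2x2 block symmetric positive definite matrix A=[[A11,A12],[A21,A22]] with CBS constant gamma < 1, the minimal generalized eigenvalue of the Schur complement S = A22 - A21 A11^{-1} A12 with respect to A22 satisfies lambda_min(A22^{-1} S) >= 1 - gamma^2. -/
/-!
With `w = A11⁻¹ A12 v2` one has `v2ᵀ A21 A11⁻¹ A12 v2 = wᵀ A11 w = wᵀ A12 v2`, so the CBS
inequality applied to `(w, v2)` reads `t ≤ γ √t √s` for `t = wᵀ A11 w` and `s = v2ᵀ A22 v2`.
Hence `t ≤ γ² s`, and `v2ᵀ S v2 = s - t ≥ (1 - γ²) s`.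
-/

open Matrix Real

theorem le_sq_mul_of_le_mul_sqrt_mul_sqrt {t s γ : ℝ} (ht : 0 ≤ t) (hs : 0 ≤ s)
    (h : t ≤ γ * √t * √s) : t ≤ γ ^ 2 * s := by
  have hsq : t * t ≤ t * (γ ^ 2 * s) :=
    calc t * t ≤ (γ * √t * √s) ^ 2 := by nlinarith
      _ = t * (γ ^ 2 * s) := by rw [mul_pow, mul_pow, sq_sqrt ht, sq_sqrt hs]; ring
  rcases ht.eq_or_lt with rfl | htpos
  · positivity
  · exact le_of_mul_le_mul_left hsq htpos

namespace Matrix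

variable {m n R : Type*} [Fintype m] [DecidableEq m] [Fintype n] [CommRing R]

theorem dotProduct_mulVec_nonsing_inv_mulVec {A : Matrix m m R} (hA : IsUnit A.det)
    (u : m → R) : (A⁻¹ *ᵥ u) ⬝ᵥ A *ᵥ (A⁻¹ *ᵥ u) = (A⁻¹ *ᵥ u) ⬝ᵥ u := by
  rw [mulVec_mulVec, mul_nonsing_inv A hA, one_mulVec]

theorem dotProduct_transpose_mul_nonsing_inv_mul_mulVec {A : Matrix m m R}
    (hA : IsUnit A.det) (B : Matrix m n R) (v : n → R) :
    v ⬝ᵥ (Bᵀ * A⁻¹ * B) *ᵥ v = (A⁻¹ *ᵥ B *ᵥ v) ⬝ᵥ A *ᵥ (A⁻¹ *ᵥ B *ᵥ v) := by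
  rw [dotProduct_mulVec_nonsing_inv_mulVec hA, ← mulVec_mulVec, ← mulVec_mulVec,
    dotProduct_mulVec, vecMul_transpose, dotProduct_comm]

theorem dotProduct_transpose_mul_inv_mul_mulVec_le_of_cbs {A : Matrix m m ℝ}
    {B : Matrix m n ℝ} {D : Matrix n n ℝ} (hA : A.PosDef) (hD : D.PosSemidef) {γ : ℝ}
    (hCBS : ∀ (v1 : m → ℝ) (v2 : n → ℝ),
      |v1 ⬝ᵥ B *ᵥ v2| ≤ γ * √(v1 ⬝ᵥ A *ᵥ v1) * √(v2 ⬝ᵥ D *ᵥ v2))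
    (v : n → ℝ) :
    v ⬝ᵥ (Bᵀ * A⁻¹ * B) *ᵥ v ≤ γ ^ 2 * (v ⬝ᵥ D *ᵥ v) := by
  have hdet : IsUnit A.det := (isUnit_iff_isUnit_det A).mp hA.isUnit
  set w := A⁻¹ *ᵥ B *ᵥ v
  have hw : w ⬝ᵥ A *ᵥ w = w ⬝ᵥ B *ᵥ v := dotProduct_mulVec_nonsing_inv_mulVec hdet _
  have hw_nonneg : 0 ≤ w ⬝ᵥ A *ᵥ w := by
    simpa only [star_trivial] using hA.posSemidef.dotProduct_mulVec_nonneg w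
  have hv_nonneg : 0 ≤ v ⬝ᵥ D *ᵥ v := by
    simpa only [star_trivial] using hD.dotProduct_mulVec_nonneg v
  have hcbs : w ⬝ᵥ A *ᵥ w ≤ γ * √(w ⬝ᵥ A *ᵥ w) * √(v ⬝ᵥ D *ᵥ v) := by
    simpa only [hw] using (le_abs_self _).trans (hCBS w v)
  rw [dotProduct_transpose_mul_nonsing_inv_mul_mulVec hdet]
  exact le_sq_mul_of_le_mul_sqrt_mul_sqrt hw_nonneg hv_nonneg hcbs

end Matrix

open Matrix Real in
theorem schur_complement_min_eigenvalue_cbs_general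
    {n1 n2 : ℕ} (A11 : Matrix (Fin n1) (Fin n1) ℝ) (A12 : Matrix (Fin n1) (Fin n2) ℝ)
    (A21 : Matrix (Fin n2) (Fin n1) ℝ) (A22 : Matrix (Fin n2) (Fin n2) ℝ)
    (h11 : A11.PosDef) (h22 : A22.PosDef) (h21 : A21 = A12ᵀ)
    (γ : ℝ)
    (hCBS : ∀ (v1 : Fin n1 → ℝ) (v2 : Fin n2 → ℝ),
      |v1 ⬝ᵥ A12 *ᵥ v2| ≤ γ * sqrt (v1 ⬝ᵥ A11 *ᵥ v1) * sqrt (v2 ⬝ᵥ A22 *ᵥ v2)) :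
    ∀ v2 : Fin n2 → ℝ,
      (1 - γ^2) * (v2 ⬝ᵥ A22 *ᵥ v2) ≤ v2 ⬝ᵥ (A22 - A21 * A11⁻¹ * A12) *ᵥ v2 := by
  intro v2
  have hquad := dotProduct_transpose_mul_inv_mul_mulVec_le_of_cbs h11 h22.posSemidef hCBS v2
  rw [h21, sub_mulVec, dotProduct_sub]
  linarith

open Matrix Real in
/-- The minimal generalized eigenvalue of the Schur complement `S = A22 - A21 A11⁻¹ A12`
with respect to `A22` is at least `1 - γ²`, where `γ < 1` is the CBS constant: for all
`v2`, `v2ᵀ S v2 ≥ (1 - γ²) v2ᵀ A22 v2`. -/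
theorem schur_complement_min_eigenvalue_cbs
    {n1 n2 : ℕ} (A11 : Matrix (Fin n1) (Fin n1) ℝ) (A12 : Matrix (Fin n1) (Fin n2) ℝ)
    (A21 : Matrix (Fin n2) (Fin n1) ℝ) (A22 : Matrix (Fin n2) (Fin n2) ℝ)
    (h11 : A11.PosDef) (h22 : A22.PosDef) (h21 : A21 = A12ᵀ)
    (γ : ℝ) (hγ0 : 0 ≤ γ) (hγ1 : γ < 1)
    (hCBS : ∀ (v1 : Fin n1 → ℝ) (v2 : Fin n2 → ℝ),
      |v1 ⬝ᵥ A12 *ᵥ v2| ≤ γ * sqrt (v1 ⬝ᵥ A11 *ᵥ v1) * sqrt (v2 ⬝ᵥ A22 *ᵥ v2)) :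
    ∀ v2 : Fin n2 → ℝ,
      (1 - γ^2) * (v2 ⬝ᵥ A22 *ᵥ v2) ≤ v2 ⬝ᵥ (A22 - A21 * A11⁻¹ * A12) *ᵥ v2 :=
  schur_complement_min_eigenvalue_cbs_general A11 A12 A21 A22 h11 h22 h21 γ hCBS
end
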